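/- If (K,v) is a maximal valued field of characteristic p > 0, then K^{1/p}, with the unique extension of the valuation v, is also a maximal valued field. -/

import Mathlib

/-! Common definitions for formalizing Blaszczok–Kuhlmann,
"Algebraic independence of elements in immediate extensions of valued fields". -/

universe u

namespace ValuedExt

variable {Γ : Type*} [LinearOrderedCommGroupWithZero Γ]

/-- The value group `vK` of a valued field `(K,v)`, as a subgroup of the units of `Γ`. -/
def valGroup {K : Type*} [Field K] (v : Valuation K Γ) : Subgroup Γˣ :=
  (Units.map v.toMonoidWithZeroHom.toMonoidHom).range

/-- An extension `(L|K,v)` of valued fields (along the embedding `f`) is immediate if the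
canonical embedding of value groups and the canonical embedding of residue fields are onto.
Expressed elementwise: every value of `L` is a value of `K`, and every residue of `L` is the
residue of an element of `K`. -/
def IsImmediate {K L : Type*} [Field K] [Field L] (f : K →+* L) (v : Valuation L Γ) : Prop :=
  (∀ x : L, x ≠ 0 → ∃ y : K, v (f y) = v x) ∧
  (∀ x : L, v x ≤ 1 → ∃ y : K, v (x - f y) < 1)

/-- A valued field `(K,v)` is maximal if it admits no proper immediate extension. -/
def IsMaximalField {K : Type u} [Field K] (v : Valuation K Γ) : Prop :=
  ∀ (L : Type u) [Field L] (f : K →+* L) (w : Valuation L Γ),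
    w.comap f = v → IsImmediate f w → Function.Surjective f

/-- The residue field `Kv` of a valued field `(K,v)`. -/
abbrev resField {K : Type*} [Field K] (v : Valuation K Γ) : Type _ :=
  IsLocalRing.ResidueField ↥v.valuationSubring

/-- The embedding of valuation rings induced by an embedding of valued fields. -/
def integerMap {K L : Type*} [Field K] [Field L] (f : K →+* L) (v : Valuation L Γ) :
    ↥(v.comap f).valuationSubring →+* ↥v.valuationSubring where
  toFun x := ⟨f x.1, x.2⟩
  map_one' := Subtype.ext (map_one f)
  map_mul' x y := Subtype.ext (map_mul f x.1 y.1)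
  map_zero' := Subtype.ext (map_zero f)
  map_add' x y := Subtype.ext (map_add f x.1 y.1)

instance integerMap_isLocalHom {K L : Type*} [Field K] [Field L] (f : K →+* L)
    (v : Valuation L Γ) : IsLocalHom (integerMap f v) := by
  constructor
  intro a ha
  obtain ⟨u, hu⟩ := ha
  have hval : v (f a.1) = 1 := by
    have h1 : v ((u : ↥v.valuationSubring) : L) * v (((u⁻¹ : _) : ↥v.valuationSubring) : L)
        = 1 := by
      rw [← Valuation.map_mul]
      norm_cast
      rw [mul_inv_cancel]
      exact v.map_one
    have hle : v ((u : ↥v.valuationSubring) : L) ≤ 1 := (u : ↥v.valuationSubring).2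
    have hle' : v (((u⁻¹ : _) : ↥v.valuationSubring) : L) ≤ 1 :=
      ((u⁻¹ : (↥v.valuationSubring)ˣ) : ↥v.valuationSubring).2
    have hx : v ((u : ↥v.valuationSubring) : L) = 1 := by
      rcases lt_or_eq_of_le hle with hlt | heq
      · exfalso
        have : v ((u : ↥v.valuationSubring) : L) * v (((u⁻¹ : _) : ↥v.valuationSubring) : L)
            < 1 := by
          calc v _ * v _ ≤ v ((u : ↥v.valuationSubring) : L) * 1 := by
                exact mul_le_mul_right hle' _
            _ = v ((u : ↥v.valuationSubring) : L) := mul_one _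
            _ < 1 := hlt
        rw [h1] at this
        exact lt_irrefl _ this
      · exact heq
    have : ((u : ↥v.valuationSubring) : L) = f a.1 := by
      rw [hu]; rfl
    rw [← this]
    exact hx
  have ha0 : a.1 ≠ 0 := by
    intro h0
    rw [h0, map_zero, Valuation.map_zero] at hval
    exact zero_ne_one hval
  have hinvmem : (a.1)⁻¹ ∈ (v.comap f).valuationSubring := by
    rw [Valuation.mem_valuationSubring_iff, map_inv₀]
    show (v (f a.1))⁻¹ ≤ 1
    rw [hval, inv_one]
  refine IsUnit.of_mul_eq_one (a := a) ⟨(a.1)⁻¹, hinvmem⟩ ?_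
  exact Subtype.ext (mul_inv_cancel₀ ha0)

/-- The embedding of residue fields induced by an embedding of valued fields. -/
noncomputable def residueMap {K L : Type*} [Field K] [Field L] (f : K →+* L)
    (v : Valuation L Γ) : resField (v.comap f) →+* resField v :=
  IsLocalRing.ResidueField.map (integerMap f v)

/-- The transcendence degree of a field extension given by an embedding `f`. -/
noncomputable def trdeg {K L : Type*} [Field K] [Field L] (f : K →+* L) : Cardinal :=
  letI : Algebra K L := f.toAlgebra
  ⨆ s : {s : Set L // AlgebraicIndependent K ((↑) : s → L)}, Cardinal.mk s.1

/-- The characteristic exponent of a field: `p` if the characteristic is `p > 0`, and `1` if the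
characteristic is `0`. -/
noncomputable def charExponent (R : Type*) [CommSemiring R] : ℕ := max (ringChar R) 1

/-- A valued field `(K,v)` is henselian if `v` extends uniquely (up to equivalence) to the
algebraic closure of `K`. -/
def IsHenselian {K : Type u} [Field K] {Γ' : Type*} [LinearOrderedCommGroupWithZero Γ']
    (v : Valuation K Γ') : Prop :=
  ∀ (Γ₁ Γ₂ : Type u) [LinearOrderedCommGroupWithZero Γ₁] [LinearOrderedCommGroupWithZero Γ₂]
    (w₁ : Valuation (AlgebraicClosure K) Γ₁) (w₂ : Valuation (AlgebraicClosure K) Γ₂),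
    (w₁.comap (algebraMap K (AlgebraicClosure K))).IsEquiv v →
    (w₂.comap (algebraMap K (AlgebraicClosure K))).IsEquiv v →
    w₁.IsEquiv w₂

/-- The subfield `F^p` of `p`-th powers of a field `F` (as the subfield generated by the `p`-th
powers; in characteristic `p` it is exactly the set of `p`-th powers). -/
def pPowSubfield (F : Type*) [Field F] (p : ℕ) : Subfield F :=
  Subfield.closure (Set.range fun x : F => x ^ p)

/-- The degree `[F : F^p]`, as a cardinal. -/
noncomputable def pDegreeRes (F : Type*) [Field F] (p : ℕ) : Cardinal :=
  Module.rank ↥(pPowSubfield F p) F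

/-- The subgroup `p·G` of `p`-th powers (multiplicatively) of a subgroup `G` of `Γˣ`. -/
def pMulSubgroup {G : Type*} [CommGroup G] (H : Subgroup G) (p : ℕ) : Subgroup G :=
  H.map (powMonoidHom p)

/-- The cardinality of the quotient `H/N` (of the subgroup `N ⊓ H` in `H`). -/
noncomputable def quotCard {G : Type*} [CommGroup G] (H N : Subgroup G) : Cardinal :=
  Cardinal.mk (↥H ⧸ N.subgroupOf H)

/-- The index `(vK : p·vK)` for the value group of a valuation, as a cardinal. -/
noncomputable def pIndexVal {K : Type*} [Field K] (v : Valuation K Γ) (p : ℕ) : Cardinal :=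
  quotCard (valGroup v) (pMulSubgroup (valGroup v) p)

/-- The field `K^{1/p}` of `p`-th roots of elements of `K`, inside a fixed algebraic closure. -/
noncomputable def pRootField (K : Type u) [Field K] (p : ℕ) [Fact p.Prime] [CharP K p] :
    Subfield (AlgebraicClosure K) :=
  Subfield.comap (frobenius (AlgebraicClosure K) p)
    (algebraMap K (AlgebraicClosure K)).fieldRange

/-- The canonical embedding `K → K^{1/p}`. -/
noncomputable def pRootEmb (K : Type u) [Field K] (p : ℕ) [Fact p.Prime] [CharP K p] :
    K →+* ↥(pRootField K p) where
  toFun x := ⟨algebraMap K (AlgebraicClosure K) x, by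
    rw [pRootField, Subfield.mem_comap]
    exact ⟨x ^ p, by rw [map_pow]; rfl⟩⟩
  map_one' := Subtype.ext (map_one _)
  map_mul' x y := Subtype.ext (map_mul _ x y)
  map_zero' := Subtype.ext (map_zero _)
  map_add' x y := Subtype.ext (map_add _ x y)

/-- if `(K,v)` is a maximal valued field of characteristic `p > 0`, then
`K^{1/p}`, with the unique extension of `v`, is also a maximal valued field. -/
theorem pRootField_isMaximal_of_isMaximal
    {Γ : Type u} [LinearOrderedCommGroupWithZero Γ]
    {Γ' : Type u} [LinearOrderedCommGroupWithZero Γ']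
    {K : Type u} [Field K] (p : ℕ) [Fact p.Prime] [CharP K p]
    (v : Valuation K Γ) (hmax : IsMaximalField v)
    (w : Valuation (↥(pRootField K p)) Γ') (hw : (w.comap (pRootEmb K p)).IsEquiv v) :
    IsMaximalField w := by
  intro L _ f u hcomap himm
  have hp0 : p ≠ 0 := (Fact.out : p.Prime).ne_zero
  haveI : CharP (↥(pRootField K p)) p :=
    RingHom.charP (pRootField K p).subtype Subtype.coe_injective p
  haveI : CharP L p := charP_of_injective_ringHom f.injective p
  haveI : ExpChar L p := .prime (Fact.out : p.Prime)
  set g : K →+* L := f.comp (pRootEmb K p) with hgdef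
  -- values of w pull back along f
  have hA : ∀ x : ↥(pRootField K p), u (f x) = w x := fun x => by rw [← hcomap]; rfl
  -- comparison of valuations on K
  have hE : ∀ a b : K, u (g a) ≤ u (g b) ↔ v a ≤ v b := fun a b => by
    rw [show u (g a) = w (pRootEmb K p a) from hA _,
      show u (g b) = w (pRootEmb K p b) from hA _]
    exact hw _ _
  have hEeq : ∀ a b : K, u (g a) = u (g b) ↔ v a = v b := fun a b =>
    ⟨fun h => le_antisymm ((hE a b).1 h.le) ((hE b a).1 h.ge),
     fun h => le_antisymm ((hE a b).2 h.le) ((hE b a).2 h.ge)⟩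
  have hElt : ∀ a b : K, u (g a) < u (g b) ↔ v a < v b := fun a b =>
    lt_iff_lt_of_le_iff_le (hE b a)
  -- every element of K has a p-th root in K^{1/p}
  have hroot : ∀ a : K, ∃ r : ↥(pRootField K p), r ^ p = pRootEmb K p a := by
    intro a
    obtain ⟨z, hz⟩ := IsAlgClosed.exists_pow_nat_eq
      (algebraMap K (AlgebraicClosure K) a) (Nat.pos_of_ne_zero hp0)
    have hzmem : z ∈ pRootField K p := by
      show frobenius (AlgebraicClosure K) p z ∈ (algebraMap K (AlgebraicClosure K)).fieldRange
      exact RingHom.mem_fieldRange.mpr ⟨a, by rw [frobenius_def, hz]⟩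
    refine ⟨⟨z, hzmem⟩, Subtype.ext ?_⟩
    show ((⟨z, hzmem⟩ : ↥(pRootField K p)) : AlgebraicClosure K) ^ p
      = algebraMap K (AlgebraicClosure K) a
    exact hz
  -- p-th powers of elements of K^{1/p} come from K
  have hdown : ∀ z : ↥(pRootField K p), ∃ a : K, pRootEmb K p a = z ^ p := by
    intro z
    have hz2 : frobenius (AlgebraicClosure K) p (z : AlgebraicClosure K)
        ∈ (algebraMap K (AlgebraicClosure K)).fieldRange := z.2
    obtain ⟨a, ha⟩ := RingHom.mem_fieldRange.mp hz2
    refine ⟨a, Subtype.ext ?_⟩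
    show algebraMap K (AlgebraicClosure K) a
      = ((z ^ p : ↥(pRootField K p)) : AlgebraicClosure K)
    rw [ha, frobenius_def]
    norm_cast
  -- the subfield of p-th powers of L
  set Lp : Subfield L := (frobenius L p).fieldRange with hLpdef
  have hmem : ∀ a : K, g a ∈ Lp := by
    intro a
    obtain ⟨r, hr⟩ := hroot a
    refine RingHom.mem_fieldRange.mpr ⟨f r, ?_⟩
    rw [frobenius_def, ← map_pow, hr]
    rfl
  let g' : K →+* ↥Lp :=
  { toFun := fun a => ⟨g a, hmem a⟩
    map_one' := Subtype.ext (map_one g)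
    map_mul' := fun a b => Subtype.ext (map_mul g a b)
    map_zero' := Subtype.ext (map_zero g)
    map_add' := fun a b => Subtype.ext (map_add g a b) }
  -- value surjectivity for L^p over K
  have hval : ∀ y : ↥Lp, ∃ a : K, u (g a) = u (y : L) := by
    intro y
    obtain ⟨x, hx⟩ := RingHom.mem_fieldRange.mp y.2
    have hxp : x ^ p = (y : L) := by rw [← hx, frobenius_def]
    by_cases hx0 : x = 0
    · refine ⟨0, ?_⟩
      rw [map_zero, ← hxp, hx0, zero_pow hp0]
    · obtain ⟨z, hz⟩ := himm.1 x hx0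
      obtain ⟨a, ha⟩ := hdown z
      refine ⟨a, ?_⟩
      calc u (g a) = u (f (z ^ p)) := by rw [hgdef]; show u (f (pRootEmb K p a)) = _; rw [ha]
        _ = u (f z) ^ p := by rw [map_pow, map_pow]
        _ = u x ^ p := by rw [hz]
        _ = u (x ^ p) := (map_pow u x p).symm
        _ = u (y : L) := by rw [hxp]
  -- residue surjectivity for L^p over K
  have hres : ∀ y : ↥Lp, u (y : L) ≤ 1 → ∃ a : K, u ((y : L) - g a) < 1 := by
    intro y hy
    obtain ⟨x, hx⟩ := RingHom.mem_fieldRange.mp y.2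
    have hxp : x ^ p = (y : L) := by rw [← hx, frobenius_def]
    have hx1 : u x ≤ 1 := (pow_le_one_iff hp0).mp (by rw [← map_pow, hxp]; exact hy)
    obtain ⟨z, hz⟩ := himm.2 x hx1
    obtain ⟨a, ha⟩ := hdown z
    refine ⟨a, ?_⟩
    have hsub : (y : L) - g a = (x - f z) ^ p := by
      rw [sub_pow_char, hxp, hgdef]
      show (y : L) - f (pRootEmb K p a) = (y : L) - (f z) ^ p
      rw [ha, map_pow]
    rw [hsub, map_pow]
    exact (pow_lt_one_iff hp0).mpr hz
  choose pick hpick using hval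
  -- the Γ-valued valuation on L^p
  let tv : Valuation ↥Lp Γ :=
  { toFun := fun y => v (pick y)
    map_zero' := by
      show v (pick 0) = 0
      have h0 : u (g (pick 0)) = 0 := by rw [hpick]; simp
      have h1 : pick 0 = 0 := by
        have := (Valuation.zero_iff u).mp h0
        exact g.injective (by rw [this, map_zero])
      rw [h1, map_zero]
    map_one' := by
      show v (pick 1) = 1
      have h0 : u (g (pick 1)) = u (g 1) := by
        rw [hpick, map_one g]
        norm_cast
      rw [(hEeq _ _).1 h0, map_one]
    map_mul' := fun x y => by
      have h0 : u (g (pick (x * y))) = u (g (pick x * pick y)) := by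
        rw [hpick, map_mul, map_mul]
        show u ((x : L) * (y : L)) = _
        rw [map_mul, hpick, hpick]
      show v (pick (x * y)) = v (pick x) * v (pick y)
      rw [(hEeq _ _).1 h0, map_mul]
    map_add_le_max' := fun x y => by
      have h0 : u (g (pick (x + y))) ≤ max (u (g (pick x))) (u (g (pick y))) := by
        rw [hpick, hpick, hpick]
        show u ((x : L) + (y : L)) ≤ _
        exact u.map_add _ _
      show v (pick (x + y)) ≤ max (v (pick x)) (v (pick y))
      rcases le_max_iff.mp h0 with h | h
      · exact le_max_of_le_left ((hE _ _).1 h)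
      · exact le_max_of_le_right ((hE _ _).1 h) }
  have hcom : tv.comap g' = v := by
    ext a
    show v (pick (g' a)) = v a
    exact (hEeq _ _).1 (hpick (g' a))
  have himm' : IsImmediate g' tv := by
    constructor
    · intro y _
      exact ⟨pick y, (hEeq _ _).1 (hpick (g' (pick y)))⟩
    · intro y hy
      have hy1 : v (pick y) ≤ v 1 := by rw [map_one]; exact hy
      have hyu : u (y : L) ≤ 1 := by
        rw [← hpick y]
        calc u (g (pick y)) ≤ u (g 1) := (hE _ _).2 hy1
          _ = 1 := by rw [map_one, map_one]
      obtain ⟨a, ha⟩ := hres y hyu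
      refine ⟨a, ?_⟩
      show v (pick (y - g' a)) < 1
      have h2 : u (g (pick (y - g' a))) < u (g 1) := by
        rw [hpick]
        show u ((y : L) - g a) < u (g 1)
        rw [map_one, map_one]
        exact ha
      have := (hElt _ _).1 h2
      rwa [map_one] at this
  have hsurj : Function.Surjective g' := hmax (↥Lp) g' tv hcom himm'
  intro t
  obtain ⟨a, ha⟩ := hsurj ⟨t ^ p, RingHom.mem_fieldRange.mpr ⟨t, frobenius_def ..⟩⟩
  obtain ⟨r, hr⟩ := hroot a
  refine ⟨r, ?_⟩
  have hfp : f r ^ p = t ^ p := by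
    rw [← map_pow, hr]
    show g a = t ^ p
    exact congrArg Subtype.val ha
  exact frobenius_inj L p (show frobenius L p (f r) = frobenius L p t by
    rw [frobenius_def, frobenius_def, hfp])

end ValuedExt
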